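/- (Theorem 1, recursive feasibility, constraint satisfaction and stability) Under Assumptions 1 and 2 with ρ > 0 and γ := C/(1−ρ) > 1, let V̄ > 0, M ≥ 1, and let N > N_M with N_M as in the decrease result, so that ε_{N,M} := 1 − C²ρ_γ^{N−N₀}ρ^M/(1−ρ^M) > 0. Consider the closed loop x(t+1) = f(x(t), u*(0|t)) where u*(·|t) is a minimizing input sequence for V_{N,M}(x(t)). Then for every initial condition x₀ ∈ X_V̄ := {x : V_{N,M}(x) ≤ V̄}: (i) the MPC problem is feasible at every time t ≥ 0 and x(t) ∈ X_V̄ for all t; (ii) the closed loop satisfies the constraints (x(t), u(t)) ∈ Z for all t; (iii) V_{N,M}(x(t)) is nonincreasing in t; and (iv) the origin is asymptotically stable: x(t) → 0 as t → ∞, and ‖x(t)‖ ≤ α̲^{-1}(γ_V̄ · ᾱ(‖x₀‖)) for all t, where γ_V̄ := max{γ, V̄/ε}. -/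

import Mathlib

open Finset Filter
open scoped ENNReal

noncomputable section

open scoped Classical

/-- State/input spaces are Euclidean spaces. -/
abbrev Vec (n : ℕ) := EuclideanSpace ℝ (Fin n)

/-- Open-loop state trajectory: `x(0) = x`, `x(k+1) = f(x(k), u(k))`. -/
def traj {n m : ℕ} (f : Vec n → Vec m → Vec n) (x : Vec n) (u : ℕ → Vec m) : ℕ → Vec n
  | 0 => x
  | k + 1 => f (traj f x u k) (u k)

/-- Closed-loop state trajectory under the feedback `κ` (the map `φ_x(·, x)`). -/
def phiX {n m : ℕ} (f : Vec n → Vec m → Vec n) (κ : Vec n → Vec m) (x : Vec n) : ℕ → Vec n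
  | 0 => x
  | k + 1 => f (phiX f κ x k) (κ (phiX f κ x k))

/-- `ℓ_min(x) := inf_{u ∈ U} ℓ(x, u)`. -/
def lmin {n m : ℕ} (ℓ : Vec n → Vec m → ℝ) (Uset : Set (Vec m)) (x : Vec n) : ℝ :=
  sInf ((fun u => ℓ x u) '' Uset)

/-- Finite-tail cost `V_{f,M}(x)`: sum of the stage cost along the κ-closed loop if the
constraints are satisfied along the tail, and `+∞` otherwise (for `M = 0` it equals `0`). -/
def Vtail {n m : ℕ} (f : Vec n → Vec m → Vec n) (κ : Vec n → Vec m)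
    (ℓ : Vec n → Vec m → ℝ) (Z : Set (Vec n × Vec m)) (M : ℕ) (x : Vec n) : ℝ≥0∞ :=
  if ∀ k < M, (phiX f κ x k, κ (phiX f κ x k)) ∈ Z then
    ENNReal.ofReal (∑ k ∈ Finset.range M, ℓ (phiX f κ x k) (κ (phiX f κ x k)))
  else ⊤

/-- Feasibility of the input sequence `u` over horizon `N` from state `x`. -/
def Feasible {n m : ℕ} (f : Vec n → Vec m → Vec n) (Z : Set (Vec n × Vec m))
    (Uset : Set (Vec m)) (N : ℕ) (x : Vec n) (u : ℕ → Vec m) : Prop :=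
  ∀ k < N, u k ∈ Uset ∧ (traj f x u k, u k) ∈ Z

/-- MPC open-loop cost `J_{N,M}` of the input sequence `u` from state `x`. -/
def Jcost {n m : ℕ} (f : Vec n → Vec m → Vec n) (κ : Vec n → Vec m)
    (ℓ : Vec n → Vec m → ℝ) (Z : Set (Vec n × Vec m)) (N M : ℕ) (x : Vec n)
    (u : ℕ → Vec m) : ℝ≥0∞ :=
  ENNReal.ofReal (∑ k ∈ Finset.range N, ℓ (traj f x u k) (u k)) +
    Vtail f κ ℓ Z M (traj f x u N)

/-- MPC value function `V_{N,M}(x)` (equal to `+∞` if the problem is infeasible). -/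
def Vmpc {n m : ℕ} (f : Vec n → Vec m → Vec n) (κ : Vec n → Vec m)
    (ℓ : Vec n → Vec m → ℝ) (Z : Set (Vec n × Vec m)) (Uset : Set (Vec m))
    (N M : ℕ) (x : Vec n) : ℝ≥0∞ :=
  ⨅ (u : ℕ → Vec m) (_ : Feasible f Z Uset N x u), Jcost f κ ℓ Z N M x u

/-- `u` is a minimizing (optimal) input sequence for `V_{N,M}(x)`. -/
def IsMinimizer {n m : ℕ} (f : Vec n → Vec m → Vec n) (κ : Vec n → Vec m)
    (ℓ : Vec n → Vec m → ℝ) (Z : Set (Vec n × Vec m)) (Uset : Set (Vec m))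
    (N M : ℕ) (x : Vec n) (u : ℕ → Vec m) : Prop :=
  Feasible f Z Uset N x u ∧ Vmpc f κ ℓ Z Uset N M x = Jcost f κ ℓ Z N M x u

/-- Infinite-horizon optimal cost `V_{∞,0}(x)`. -/
def Vinf {n m : ℕ} (f : Vec n → Vec m → Vec n) (ℓ : Vec n → Vec m → ℝ)
    (Z : Set (Vec n × Vec m)) (Uset : Set (Vec m)) (x : Vec n) : ℝ≥0∞ :=
  ⨅ (u : ℕ → Vec m) (_ : ∀ k, u k ∈ Uset ∧ (traj f x u k, u k) ∈ Z),
    ∑' k : ℕ, ENNReal.ofReal (ℓ (traj f x u k) (u k))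

/-- Assumption 2 (locally stabilizing controller): exponential decay of the stage
cost along the κ-closed loop and constraint satisfaction, locally (`ℓ_min(x) ≤ ε`). -/
def Assumption2 {n m : ℕ} (f : Vec n → Vec m → Vec n) (κ : Vec n → Vec m)
    (ℓ : Vec n → Vec m → ℝ) (Z : Set (Vec n × Vec m)) (Uset : Set (Vec m))
    (ρ C ε : ℝ) : Prop :=
  ρ ∈ Set.Ico (0 : ℝ) 1 ∧ 1 ≤ C ∧ 0 < ε ∧
    ∀ x : Vec n, lmin ℓ Uset x ≤ ε → ∀ k : ℕ,
      ℓ (phiX f κ x k) (κ (phiX f κ x k)) ≤ C * ρ ^ k * lmin ℓ Uset x ∧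
      (phiX f κ x k, κ (phiX f κ x k)) ∈ Z

/-- A class-`K∞` function: continuous, strictly increasing and unbounded on `[0,∞)`
with `α(0) = 0`. -/
def IsKInfty (α : ℝ → ℝ) : Prop :=
  ContinuousOn α (Set.Ici 0) ∧ StrictMonoOn α (Set.Ici 0) ∧ α 0 = 0 ∧
    Tendsto α atTop atTop

/-!
Along an optimal input sequence, `V_{N,M}(x)` minus the cost accumulated up to step `k` is a
cost-to-go `W k`. If `ℓ_min ≤ ε` at step `k`, the feedback `κ` may take over from there, so
`W k ≤ γ ℓ_min ≤ γ ℓ`; otherwise the stage cost exceeds `ε`. Hence `W` is below `γ ε` after `N₀`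
steps and afterwards contracts by `ρ_γ = (γ - 1)/γ` per step, so the tail cost `W N` is at most
`ρ_γ^(N-N₀) γ ℓ(x, u*(0))`. Shifting the optimal sequence and appending one more feedback step
gives a feasible candidate at `x⁺`; by Assumption 2 the appended stage cost is at most
`C²ρ^M/(1-ρ^M)` times `W N / γ`. This is the decrease `V(x⁺) ≤ V(x) - ε_{N,M} ℓ(x, u*(0))`,
which gives invariance of `X_V̄` and, with `α̲(‖x‖) ≤ ℓ_min ≤ V ≤ γ_V̄ ℓ_min` on `X_V̄`,
summable stage costs and the stability bound.
-/

section CostToGo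

def CostToGoStep (γ ε : ℝ) (W s : ℕ → ℝ) (k : ℕ) : Prop :=
  W (k + 1) = W k - s k ∧ 0 ≤ s k ∧ (W k ≤ γ * s k ∧ W k ≤ γ * ε ∨ ε < s k)

variable {γ ε : ℝ} {W s : ℕ → ℝ} {K : ℕ}

lemma CostToGoStep.le_of_le (h : ∀ k < K, CostToGoStep γ ε W s k) {i j : ℕ} (hij : i ≤ j)
    (hj : j ≤ K) : W j ≤ W i := by
  induction j, hij using Nat.le_induction with
  | base => exact le_rfl
  | succ j _ ih =>
    obtain ⟨hW, hs, -⟩ := h j (by omega)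
    linarith [ih (by omega)]

lemma CostToGoStep.le_max (hε : 0 ≤ ε) (h : ∀ k < K, CostToGoStep γ ε W s k) :
    W K ≤ max (γ * ε) (W 0 - K * ε) := by
  induction K with
  | zero => simp
  | succ K ih =>
    have ih := ih fun k hk => h k (by omega)
    obtain ⟨hW, hs, ⟨-, hWε⟩ | hsε⟩ := h K (by omega)
    · exact le_max_of_le_left (by linarith)
    · calc W (K + 1) ≤ max (γ * ε) (W 0 - K * ε) - ε := by linarith
        _ = max (γ * ε - ε) (W 0 - K * ε - ε) := (max_sub_sub_right _ _ _).symm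
        _ ≤ max (γ * ε) (W 0 - ↑(K + 1) * ε) := by
          push_cast
          exact max_le_max (by linarith) (by linarith)

/-- Either the stage cost is at least `W / γ`, or the drop `ε ≥ Q / γ` is at least as large. -/
lemma CostToGoStep.le_geometric (hγ : 1 ≤ γ) {a d : ℕ}
    (h : ∀ i < d, CostToGoStep γ ε W s (a + i)) {Q : ℝ} (hQ : 0 ≤ Q) (hQε : Q ≤ γ * ε)
    (ha : W a ≤ Q) : W (a + d) ≤ ((γ - 1) / γ) ^ d * Q := by
  have hγ0 : 0 < γ := by linarith
  have hr : 0 ≤ (γ - 1) / γ := div_nonneg (by linarith) hγ0.le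
  induction d with
  | zero => simpa using ha
  | succ d ih =>
    have ih := ih fun i hi => h i (by omega)
    obtain ⟨hW, -, ⟨hWs, -⟩ | hsε⟩ := h d (by omega)
    · calc W (a + (d + 1)) = W (a + d) - s (a + d) := hW
        _ ≤ (γ - 1) / γ * W (a + d) := by
          rw [div_mul_eq_mul_div, le_div_iff₀ hγ0]; linarith
        _ ≤ (γ - 1) / γ * (((γ - 1) / γ) ^ d * Q) := mul_le_mul_of_nonneg_left ih hr
        _ = ((γ - 1) / γ) ^ (d + 1) * Q := by ring
    · have hpow : ((γ - 1) / γ) ^ d * Q / γ ≤ ε := by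
        rw [div_le_iff₀ hγ0, mul_comm ε]
        exact (mul_le_of_le_one_left hQ
          (pow_le_one₀ hr (div_le_one_of_le₀ (by linarith) hγ0.le))).trans hQε
      calc W (a + (d + 1)) = W (a + d) - s (a + d) := hW
        _ ≤ ((γ - 1) / γ) ^ d * Q - ((γ - 1) / γ) ^ d * Q / γ := by linarith
        _ = ((γ - 1) / γ) ^ (d + 1) * Q := by rw [← one_sub_div hγ0.ne', pow_succ]; ring

lemma CostToGoStep.le_of_horizon (hγ : 1 ≤ γ) (hε : 0 < ε) {N₀ N : ℕ} {Vbar : ℝ}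
    (h : ∀ k < N, CostToGoStep γ ε W s k) (hN₀N : N₀ < N) (hN₀ : Vbar - γ * ε ≤ N₀ * ε)
    (hW0 : W 0 ≤ Vbar) (hWN : 0 ≤ W N) :
    W N ≤ ((γ - 1) / γ) ^ (N - N₀) * (min γ (Vbar / ε) * ε) ∧
      W N ≤ ((γ - 1) / γ) ^ (N - N₀) * (γ * s 0) := by
  have hr : 0 ≤ ((γ - 1) / γ) ^ (N - N₀) := pow_nonneg (div_nonneg (by linarith) (by linarith)) _
  have hgeom (Q : ℝ) (hQ : 0 ≤ Q) (hQε : Q ≤ γ * ε) (hN₀Q : W N₀ ≤ Q) :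
      W N ≤ ((γ - 1) / γ) ^ (N - N₀) * Q := by
    have := CostToGoStep.le_geometric hγ (a := N₀) (d := N - N₀) (fun i hi => h _ (by omega))
      hQ hQε hN₀Q
    rwa [Nat.add_sub_cancel' hN₀N.le] at this
  have hWN0 : W N ≤ W 0 := CostToGoStep.le_of_le h (Nat.zero_le N) le_rfl
  have hWN₀ : W N₀ ≤ W 0 := CostToGoStep.le_of_le h (Nat.zero_le N₀) hN₀N.le
  have hfirst : W N ≤ ((γ - 1) / γ) ^ (N - N₀) * (min γ (Vbar / ε) * ε) := by
    rw [min_mul_of_nonneg _ _ hε.le, div_mul_cancel₀ _ hε.ne']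
    refine hgeom _ (le_min (by positivity) (by linarith)) (min_le_left _ _) (le_min ?_ ?_)
    · exact (CostToGoStep.le_max hε.le fun k hk => h k (by omega)).trans
        (max_le le_rfl (by linarith))
    · exact hWN₀.trans hW0
  refine ⟨hfirst, ?_⟩
  obtain ⟨-, -, ⟨hWs, hWε⟩ | hsε⟩ := h 0 (by omega)
  · exact (hgeom _ (hWN.trans hWN0) hWε hWN₀).trans (mul_le_mul_of_nonneg_left hWs hr)
  · refine hfirst.trans (mul_le_mul_of_nonneg_left ?_ hr)
    calc min γ (Vbar / ε) * ε ≤ γ * ε := by gcongr; exact min_le_left _ _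
      _ ≤ γ * s 0 := by gcongr

end CostToGo

lemma mul_pow_lt_one_of_log_div_lt {a γ : ℝ} {k : ℕ} (ha : 0 ≤ a) (hγ : 1 < γ)
    (h : Real.log a / (Real.log γ - Real.log (γ - 1)) < k) : a * ((γ - 1) / γ) ^ k < 1 := by
  rcases ha.eq_or_lt with rfl | ha
  · simp
  have hL : 0 < Real.log γ - Real.log (γ - 1) :=
    sub_pos.2 (Real.log_lt_log (by linarith) (by linarith))
  have hr : 0 < (γ - 1) / γ := div_pos (by linarith) (by linarith)
  rw [← Real.log_neg_iff (by positivity), Real.log_mul ha.ne' (pow_pos hr k).ne', Real.log_pow,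
    Real.log_div (by linarith) (by linarith)]
  rw [div_lt_iff₀ hL] at h
  linarith

lemma horizon_lt_and_mul_pow_lt_one {γ a b : ℝ} {N₀ N : ℕ} (hγ : 1 < γ) (ha : 0 ≤ a)
    (hb : 0 ≤ b)
    (hN : (N₀ : ℝ) + max (Real.log a) (max (Real.log b) 0) / (Real.log γ - Real.log (γ - 1)) < N) :
    N₀ < N ∧ a * ((γ - 1) / γ) ^ (N - N₀) < 1 ∧ b * ((γ - 1) / γ) ^ (N - N₀) < 1 := by
  have hL : 0 < Real.log γ - Real.log (γ - 1) :=
    sub_pos.2 (Real.log_lt_log (by linarith) (by linarith))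
  have hmax : 0 ≤ max (Real.log a) (max (Real.log b) 0) / (Real.log γ - Real.log (γ - 1)) :=
    div_nonneg (le_max_of_le_right (le_max_right _ _)) hL.le
  have hN₀N : N₀ < N := by exact_mod_cast (show (N₀ : ℝ) < N by linarith)
  have hk : ((N - N₀ : ℕ) : ℝ) = N - N₀ := by rw [Nat.cast_sub hN₀N.le]
  refine ⟨hN₀N, mul_pow_lt_one_of_log_div_lt ha hγ ?_, mul_pow_lt_one_of_log_div_lt hb hγ ?_⟩
  · have := div_le_div_of_nonneg_right (le_max_left (Real.log a) (max (Real.log b) 0)) hL.le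
    rw [hk]; linarith
  · have := div_le_div_of_nonneg_right
      ((le_max_left (Real.log b) 0).trans (le_max_right (Real.log a) _)) hL.le
    rw [hk]; linarith

lemma IsKInfty.nonneg {α : ℝ → ℝ} (hα : IsKInfty α) {r : ℝ} (hr : 0 ≤ r) : 0 ≤ α r :=
  hα.2.2.1 ▸ hα.2.1.monotoneOn Set.self_mem_Ici hr hr

lemma IsKInfty.tendsto_zero_of_tendsto {α : ℝ → ℝ} (hα : IsKInfty α) {ι : Type*}
    {l : Filter ι} {r : ι → ℝ} (hr : ∀ i, 0 ≤ r i) (h : Tendsto (fun i => α (r i)) l (nhds 0)) :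
    Tendsto r l (nhds 0) := by
  refine tendsto_order.2 ⟨fun a ha => Eventually.of_forall fun i => ha.trans_le (hr i),
    fun δ hδ => ?_⟩
  have hαδ : 0 < α δ := hα.2.2.1 ▸ hα.2.1 Set.self_mem_Ici hδ.le hδ
  filter_upwards [h.eventually (gt_mem_nhds hαδ)] with i hi
  exact (hα.2.1.lt_iff_lt (hr i) hδ.le).1 hi

/-- The decrements of `V` are summable. -/
lemma tendsto_zero_of_lyapunov {E : Type*} [SeminormedAddCommGroup E] {x : ℕ → E}
    {V : ℕ → ℝ≥0∞} {α : ℝ → ℝ} {c : ℝ} (hα : IsKInfty α) (hc : 0 < c)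
    (hV : ∀ t, V (t + 1) + ENNReal.ofReal (c * α ‖x t‖) ≤ V t) (hV0 : V 0 ≠ ⊤) :
    Tendsto x atTop (nhds 0) := by
  have hsum (T : ℕ) : ∑ t ∈ range T, ENNReal.ofReal (c * α ‖x t‖) + V T ≤ V 0 := by
    induction T with
    | zero => simp
    | succ T ih =>
      calc ∑ t ∈ range (T + 1), ENNReal.ofReal (c * α ‖x t‖) + V (T + 1)
          = ∑ t ∈ range T, ENNReal.ofReal (c * α ‖x t‖) +
              (V (T + 1) + ENNReal.ofReal (c * α ‖x T‖)) := by rw [sum_range_succ]; ring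
        _ ≤ V 0 := (add_le_add_right (hV T) _).trans ih
  have hdec := ENNReal.tendsto_atTop_zero_of_tsum_ne_top <| ne_top_of_le_ne_top hV0 <|
    ENNReal.tsum_le_of_sum_range_le fun T => le_self_add.trans (hsum T)
  have hcα := ((ENNReal.tendsto_toReal_zero_iff fun _ => ENNReal.ofReal_ne_top).2 hdec).congr
    fun t => ENNReal.toReal_ofReal (mul_nonneg hc.le (hα.nonneg (norm_nonneg (x t))))
  refine tendsto_zero_iff_norm_tendsto_zero.2
    (hα.tendsto_zero_of_tendsto (fun t => norm_nonneg _) ?_)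
  simpa [hc.ne'] using hcα.const_mul c⁻¹

lemma phiX_add {n m : ℕ} (f : Vec n → Vec m → Vec n) (κ : Vec n → Vec m) (y : Vec n)
    (a b : ℕ) : phiX f κ y (a + b) = phiX f κ (phiX f κ y a) b := by
  induction b with
  | zero => rfl
  | succ b ih => rw [← add_assoc, phiX, ih, phiX]

lemma traj_shift {n m : ℕ} (f : Vec n → Vec m → Vec n) (x : Vec n) (u : ℕ → Vec m) (j : ℕ) :
    traj f (f x (u 0)) (fun i => u (i + 1)) j = traj f x u (j + 1) := by
  induction j with
  | zero => rfl
  | succ j ih => rw [traj, ih]; rfl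

section Splice

variable {n m : ℕ} (f : Vec n → Vec m → Vec n) (κ : Vec n → Vec m)

def spliceInput (x : Vec n) (u : ℕ → Vec m) (k j : ℕ) : Vec m :=
  if j < k then u j else κ (phiX f κ (traj f x u k) (j - k))

variable {f κ} {x : Vec n} {u : ℕ → Vec m} {k : ℕ}

lemma spliceInput_of_lt {j : ℕ} (hj : j < k) : spliceInput f κ x u k j = u j :=
  if_pos hj

lemma spliceInput_add (d : ℕ) :
    spliceInput f κ x u k (k + d) = κ (phiX f κ (traj f x u k) d) := by
  simp [spliceInput]

lemma traj_spliceInput_of_le {j : ℕ} (hj : j ≤ k) :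
    traj f x (spliceInput f κ x u k) j = traj f x u j := by
  induction j with
  | zero => rfl
  | succ j ih => rw [traj, ih (by omega), spliceInput_of_lt (by omega), traj]

lemma traj_spliceInput_add (d : ℕ) :
    traj f x (spliceInput f κ x u k) (k + d) = phiX f κ (traj f x u k) d := by
  induction d with
  | zero => exact traj_spliceInput_of_le le_rfl
  | succ d ih => rw [← add_assoc, traj, ih, spliceInput_add, phiX]

end Splice

section FeedbackCost

variable {n m : ℕ} (f : Vec n → Vec m → Vec n) (κ : Vec n → Vec m) (ℓ : Vec n → Vec m → ℝ)

def feedbackCost (L : ℕ) (y : Vec n) : ℝ :=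
  ∑ i ∈ range L, ℓ (phiX f κ y i) (κ (phiX f κ y i))

variable {f κ ℓ} {Z : Set (Vec n × Vec m)} {Uset : Set (Vec m)} {ρ C ε : ℝ} {L : ℕ} {y : Vec n}

lemma feedbackCost_nonneg (hℓ0 : ∀ x u, 0 ≤ ℓ x u) : 0 ≤ feedbackCost f κ ℓ L y :=
  sum_nonneg fun _ _ => hℓ0 _ _

lemma feedbackCost_succ :
    feedbackCost f κ ℓ (L + 1) y = feedbackCost f κ ℓ L y + ℓ (phiX f κ y L) (κ (phiX f κ y L)) :=
  sum_range_succ _ _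

lemma stage_le_feedbackCost (hℓ0 : ∀ x u, 0 ≤ ℓ x u) {j : ℕ} (hj : j < L) :
    ℓ (phiX f κ y j) (κ (phiX f κ y j)) ≤ feedbackCost f κ ℓ L y :=
  single_le_sum (f := fun i => ℓ (phiX f κ y i) (κ (phiX f κ y i))) (fun _ _ => hℓ0 _ _)
    (mem_range.2 hj)

lemma lmin_nonneg (hℓ0 : ∀ x u, 0 ≤ ℓ x u) (x : Vec n) : 0 ≤ lmin ℓ Uset x :=
  Real.sInf_nonneg (by rintro _ ⟨u, -, rfl⟩; exact hℓ0 x u)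

lemma lmin_le (hℓ0 : ∀ x u, 0 ≤ ℓ x u) {x : Vec n} {u : Vec m} (hu : u ∈ Uset) :
    lmin ℓ Uset x ≤ ℓ x u :=
  csInf_le ⟨0, by rintro _ ⟨v, -, rfl⟩; exact hℓ0 x v⟩ ⟨u, hu, rfl⟩

lemma Assumption2.one_le_div (hA2 : Assumption2 f κ ℓ Z Uset ρ C ε) : 1 ≤ C / (1 - ρ) := by
  obtain ⟨⟨hρ0, hρ1⟩, hC, -⟩ := hA2
  rw [le_div_iff₀ (by linarith)]
  linarith

lemma Assumption2.feedbackCost_le (hA2 : Assumption2 f κ ℓ Z Uset ρ C ε)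
    (hℓ0 : ∀ x u, 0 ≤ ℓ x u) (hy : lmin ℓ Uset y ≤ ε) (L : ℕ) :
    feedbackCost f κ ℓ L y ≤ C / (1 - ρ) * lmin ℓ Uset y := by
  obtain ⟨⟨hρ0, hρ1⟩, hC, -, h⟩ := hA2
  have hgeom : ∑ i ∈ range L, ρ ^ i ≤ 1 / (1 - ρ) := by
    simpa using geom_sum_Ico_le_of_lt_one hρ0 hρ1 (m := 0) (n := L)
  calc feedbackCost f κ ℓ L y
      ≤ ∑ i ∈ range L, C * ρ ^ i * lmin ℓ Uset y := sum_le_sum fun i _ => (h y hy i).1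
    _ = C * lmin ℓ Uset y * ∑ i ∈ range L, ρ ^ i := by
        rw [mul_sum]; exact sum_congr rfl fun _ _ => by ring
    _ ≤ C * lmin ℓ Uset y * (1 / (1 - ρ)) := by
        have := lmin_nonneg hℓ0 (Uset := Uset) y
        gcongr
    _ = C / (1 - ρ) * lmin ℓ Uset y := by ring

/-- Assumption 2 applied from each of the first `M` states, weighted by `ρ ^ j` and summed. -/
lemma Assumption2.stage_le_mul_feedbackCost (hA2 : Assumption2 f κ ℓ Z Uset ρ C ε)
    (hℓ0 : ∀ x u, 0 ≤ ℓ x u) (hκU : ∀ x, κ x ∈ Uset) {M : ℕ} (hM : 1 ≤ M)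
    (hy : ∀ j < M, lmin ℓ Uset (phiX f κ y j) ≤ ε) :
    ℓ (phiX f κ y M) (κ (phiX f κ y M)) ≤
      C * ρ ^ M * (1 - ρ) / (1 - ρ ^ M) * feedbackCost f κ ℓ M y := by
  obtain ⟨⟨hρ0, hρ1⟩, hC, -, h⟩ := hA2
  have hterm : ∀ j < M, ℓ (phiX f κ y M) (κ (phiX f κ y M)) * ρ ^ j ≤
      C * ρ ^ M * ℓ (phiX f κ y j) (κ (phiX f κ y j)) := by
    intro j hj
    have hdecay := (h _ (hy j hj) (M - j)).1
    rw [← phiX_add, Nat.add_sub_cancel' hj.le] at hdecay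
    calc ℓ (phiX f κ y M) (κ (phiX f κ y M)) * ρ ^ j
        ≤ C * ρ ^ (M - j) * lmin ℓ Uset (phiX f κ y j) * ρ ^ j := by gcongr
      _ ≤ C * ρ ^ (M - j) * ℓ (phiX f κ y j) (κ (phiX f κ y j)) * ρ ^ j := by
        gcongr
        exact lmin_le hℓ0 (hκU _)
      _ = C * ρ ^ M * ℓ (phiX f κ y j) (κ (phiX f κ y j)) := by
        rw [← pow_sub_mul_pow ρ hj.le]; ring
  have h1ρM : 0 < 1 - ρ ^ M := sub_pos.2 (pow_lt_one₀ hρ0 hρ1 (by omega))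
  rw [feedbackCost, div_mul_eq_mul_div, le_div_iff₀ h1ρM, ← geom_sum_mul_neg, ← mul_assoc,
    mul_sum, mul_right_comm _ (1 - ρ), mul_sum]
  exact mul_le_mul_of_nonneg_right (sum_le_sum fun j hj => hterm j (mem_range.1 hj))
    (by linarith)

end FeedbackCost

section ValueFunction

variable {n m : ℕ} {f : Vec n → Vec m → Vec n} {κ : Vec n → Vec m} {ℓ : Vec n → Vec m → ℝ}
  {Z : Set (Vec n × Vec m)} {Uset : Set (Vec m)} {ρ C ε : ℝ} {N M : ℕ} {x : Vec n}
  {u : ℕ → Vec m}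

lemma Jcost_eq_ofReal (hℓ0 : ∀ x u, 0 ≤ ℓ x u)
    (hZ : ∀ i < M, (phiX f κ (traj f x u N) i, κ (phiX f κ (traj f x u N) i)) ∈ Z) :
    Jcost f κ ℓ Z N M x u = ENNReal.ofReal
      (∑ j ∈ range N, ℓ (traj f x u j) (u j) + feedbackCost f κ ℓ M (traj f x u N)) := by
  rw [Jcost, Vtail, if_pos hZ, ENNReal.ofReal_add (sum_nonneg fun _ _ => hℓ0 _ _)
    (feedbackCost_nonneg hℓ0), feedbackCost]

lemma tail_mem_of_Jcost_ne_top (h : Jcost f κ ℓ Z N M x u ≠ ⊤) :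
    ∀ i < M, (phiX f κ (traj f x u N) i, κ (phiX f κ (traj f x u N) i)) ∈ Z := by
  by_contra hZ
  exact h (by rw [Jcost, Vtail, if_neg hZ, add_top])

lemma ofReal_lmin_le_Vmpc (hℓ0 : ∀ x u, 0 ≤ ℓ x u) (hN : 0 < N) (x : Vec n) :
    ENNReal.ofReal (lmin ℓ Uset x) ≤ Vmpc f κ ℓ Z Uset N M x :=
  le_iInf₂ fun u hu => calc
    ENNReal.ofReal (lmin ℓ Uset x) ≤ ENNReal.ofReal (∑ j ∈ range N, ℓ (traj f x u j) (u j)) :=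
      ENNReal.ofReal_le_ofReal <| (lmin_le hℓ0 (hu 0 hN).1).trans
        (single_le_sum (f := fun j => ℓ (traj f x u j) (u j)) (fun _ _ => hℓ0 _ _)
          (mem_range.2 hN))
    _ ≤ Jcost f κ ℓ Z N M x u := le_self_add

lemma Vmpc_le_splice (hℓ0 : ∀ x u, 0 ≤ ℓ x u) (hκU : ∀ x, κ x ∈ Uset) {k d : ℕ}
    (hu : ∀ j < k, u j ∈ Uset ∧ (traj f x u j, u j) ∈ Z)
    (hZ : ∀ i < d + M, (phiX f κ (traj f x u k) i, κ (phiX f κ (traj f x u k) i)) ∈ Z) :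
    Vmpc f κ ℓ Z Uset (k + d) M x ≤ ENNReal.ofReal
      (∑ j ∈ range k, ℓ (traj f x u j) (u j) + feedbackCost f κ ℓ (d + M) (traj f x u k)) := by
  have hv : Feasible f Z Uset (k + d) x (spliceInput f κ x u k) := by
    intro j hj
    rcases lt_or_ge j k with hjk | hjk
    · rw [traj_spliceInput_of_le hjk.le, spliceInput_of_lt hjk]
      exact hu j hjk
    · obtain ⟨i, rfl⟩ := Nat.exists_eq_add_of_le hjk
      rw [traj_spliceInput_add, spliceInput_add]
      exact ⟨hκU _, hZ i (by omega)⟩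
  refine (iInf₂_le _ hv).trans_eq ?_
  rw [Jcost_eq_ofReal hℓ0 fun i hi => by
      rw [traj_spliceInput_add, ← phiX_add]; exact hZ _ (by omega),
    feedbackCost, feedbackCost, sum_range_add, sum_range_add, add_assoc]
  simp only [traj_spliceInput_add, spliceInput_add, ← phiX_add]
  congr 2
  exact sum_congr rfl fun j hj => by
    rw [traj_spliceInput_of_le (mem_range.1 hj).le, spliceInput_of_lt (mem_range.1 hj)]

lemma Vmpc_le_of_lmin_le (hℓ0 : ∀ x u, 0 ≤ ℓ x u) (hκU : ∀ x, κ x ∈ Uset)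
    (hA2 : Assumption2 f κ ℓ Z Uset ρ C ε) {k : ℕ} (hk : k ≤ N)
    (hu : ∀ j < k, u j ∈ Uset ∧ (traj f x u j, u j) ∈ Z) (hε : lmin ℓ Uset (traj f x u k) ≤ ε) :
    Vmpc f κ ℓ Z Uset N M x ≤ ENNReal.ofReal (∑ j ∈ range k, ℓ (traj f x u j) (u j) +
      C / (1 - ρ) * lmin ℓ Uset (traj f x u k)) := by
  obtain ⟨d, rfl⟩ := Nat.exists_eq_add_of_le hk
  refine (Vmpc_le_splice hℓ0 hκU hu fun i _ => (hA2.2.2.2 _ hε i).2).trans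
    (ENNReal.ofReal_le_ofReal ?_)
  gcongr
  exact hA2.feedbackCost_le hℓ0 hε _

lemma Vmpc_le_max_mul_lmin (hℓ0 : ∀ x u, 0 ≤ ℓ x u) (hκU : ∀ x, κ x ∈ Uset)
    (hA2 : Assumption2 f κ ℓ Z Uset ρ C ε) {Vbar : ℝ} (hVbar : 0 ≤ Vbar)
    (hx : Vmpc f κ ℓ Z Uset N M x ≤ ENNReal.ofReal Vbar) :
    Vmpc f κ ℓ Z Uset N M x ≤ ENNReal.ofReal (max (C / (1 - ρ)) (Vbar / ε) * lmin ℓ Uset x) := by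
  have hε := hA2.2.2.1
  rcases le_or_gt (lmin ℓ Uset x) ε with hxε | hxε
  · refine (Vmpc_le_of_lmin_le hℓ0 hκU hA2 (u := fun _ => 0) (Nat.zero_le N) (by simp)
      hxε).trans (ENNReal.ofReal_le_ofReal ?_)
    rw [range_zero, sum_empty, zero_add]
    exact mul_le_mul_of_nonneg_right (le_max_left _ _) (lmin_nonneg hℓ0 x)
  · refine hx.trans (ENNReal.ofReal_le_ofReal ?_)
    calc Vbar = Vbar / ε * ε := (div_mul_cancel₀ _ hε.ne').symm
      _ ≤ max (C / (1 - ρ)) (Vbar / ε) * lmin ℓ Uset x :=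
        mul_le_mul (le_max_right _ _) hxε.le hε.le (le_max_of_le_right (by positivity))

lemma costToGoStep_of_feasible (hℓ0 : ∀ x u, 0 ≤ ℓ x u) (hκU : ∀ x, κ x ∈ Uset)
    (hA2 : Assumption2 f κ ℓ Z Uset ρ C ε) (hu : Feasible f Z Uset N x u) {k : ℕ} (hk : k < N) :
    CostToGoStep (C / (1 - ρ)) ε
      (fun k => (Vmpc f κ ℓ Z Uset N M x).toReal - ∑ j ∈ range k, ℓ (traj f x u j) (u j))
      (fun k => ℓ (traj f x u k) (u k)) k := by
  refine ⟨by simp only [sum_range_succ]; ring, hℓ0 _ _, ?_⟩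
  have hs : lmin ℓ Uset (traj f x u k) ≤ ℓ (traj f x u k) (u k) := lmin_le hℓ0 (hu k hk).1
  rcases le_or_gt (lmin ℓ Uset (traj f x u k)) ε with hε | hε
  · have hγ : 0 ≤ C / (1 - ρ) := zero_le_one.trans hA2.one_le_div
    have hVk := ENNReal.toReal_le_of_le_ofReal
      (add_nonneg (sum_nonneg fun _ _ => hℓ0 _ _) (mul_nonneg hγ (lmin_nonneg hℓ0 _)))
      (Vmpc_le_of_lmin_le (M := M) hℓ0 hκU hA2 hk.le (fun j hj => hu j (hj.trans hk)) hε)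
    exact Or.inl ⟨by nlinarith, by nlinarith⟩
  · exact Or.inr (hε.trans_le hs)

lemma Vmpc_shift_le (hℓ0 : ∀ x u, 0 ≤ ℓ x u) (hκU : ∀ x, κ x ∈ Uset)
    (hA2 : Assumption2 f κ ℓ Z Uset ρ C ε) (hN : 0 < N) (hu : Feasible f Z Uset N x u)
    (hε : lmin ℓ Uset (traj f x u N) ≤ ε) :
    Vmpc f κ ℓ Z Uset N M (f x (u 0)) ≤ ENNReal.ofReal (∑ j ∈ range N, ℓ (traj f x u j) (u j) -
      ℓ x (u 0) + feedbackCost f κ ℓ (M + 1) (traj f x u N)) := by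
  obtain ⟨K, rfl⟩ : ∃ K, N = K + 1 := ⟨N - 1, by omega⟩
  have hshift := Vmpc_le_splice (M := M) (x := f x (u 0)) (u := fun i => u (i + 1)) (d := 1) hℓ0
    hκU (fun j hj => traj_shift f x u j ▸ hu (j + 1) (by omega))
    (fun i _ => by rw [traj_shift]; exact (hA2.2.2.2 _ hε i).2)
  rw [traj_shift, add_comm 1 M] at hshift
  refine hshift.trans_eq (congrArg ENNReal.ofReal ?_)
  simp only [traj_shift, sum_range_succ' _ K, traj]
  ring

lemma IsMinimizer.Vmpc_eq (hℓ0 : ∀ x u, 0 ≤ ℓ x u) (hu : IsMinimizer f κ ℓ Z Uset N M x u)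
    (hx : Vmpc f κ ℓ Z Uset N M x ≠ ⊤) :
    Vmpc f κ ℓ Z Uset N M x = ENNReal.ofReal
      (∑ j ∈ range N, ℓ (traj f x u j) (u j) + feedbackCost f κ ℓ M (traj f x u N)) :=
  hu.2.trans (Jcost_eq_ofReal hℓ0 (tail_mem_of_Jcost_ne_top (hu.2 ▸ hx)))

theorem IsMinimizer.feedbackCost_le (hℓ0 : ∀ x u, 0 ≤ ℓ x u) (hκU : ∀ x, κ x ∈ Uset)
    (hA2 : Assumption2 f κ ℓ Z Uset ρ C ε) {γ Vbar : ℝ} {N₀ : ℕ} (hγ : γ = C / (1 - ρ))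
    (hVbar : 0 ≤ Vbar) (hN₀N : N₀ < N) (hN₀ : Vbar - γ * ε ≤ N₀ * ε)
    (hγlow : min γ (Vbar / ε) * ((γ - 1) / γ) ^ (N - N₀) ≤ 1)
    (hu : IsMinimizer f κ ℓ Z Uset N M x u)
    (hx : Vmpc f κ ℓ Z Uset N M x ≤ ENNReal.ofReal Vbar) :
    feedbackCost f κ ℓ M (traj f x u N) ≤ ε ∧
      feedbackCost f κ ℓ M (traj f x u N) ≤ ((γ - 1) / γ) ^ (N - N₀) * (γ * ℓ x (u 0)) := by
  have hε := hA2.2.2.1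
  have hV := hu.Vmpc_eq hℓ0 (ne_top_of_le_ne_top ENNReal.ofReal_ne_top hx)
  set S := ∑ j ∈ range N, ℓ (traj f x u j) (u j)
  set T := feedbackCost f κ ℓ M (traj f x u N)
  have hT : 0 ≤ T := feedbackCost_nonneg hℓ0
  have hST : (Vmpc f κ ℓ Z Uset N M x).toReal = S + T := by
    rw [hV, ENNReal.toReal_ofReal (add_nonneg (sum_nonneg fun _ _ => hℓ0 _ _) hT)]
  have hWN : S + T - ∑ j ∈ range N, ℓ (traj f x u j) (u j) = T := add_sub_cancel_left S T
  obtain ⟨hTlow, hTℓ⟩ := CostToGoStep.le_of_horizon (hγ ▸ hA2.one_le_div) hε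
    (hST ▸ hγ ▸ fun k hk => costToGoStep_of_feasible (M := M) hℓ0 hκU hA2 hu.1 hk) hN₀N hN₀
    (by simpa using (ENNReal.ofReal_le_ofReal_iff hVbar).1 (hV ▸ hx)) (by rwa [hWN])
  rw [hWN] at hTlow hTℓ
  refine ⟨?_, hTℓ⟩
  calc T ≤ ((γ - 1) / γ) ^ (N - N₀) * (min γ (Vbar / ε) * ε) := hTlow
    _ = min γ (Vbar / ε) * ((γ - 1) / γ) ^ (N - N₀) * ε := by ring
    _ ≤ ε := mul_le_of_le_one_left hε.le hγlow

/-- The factor of `ℓ x (u 0)` is the paper's `ε_{N,M}`. -/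
theorem IsMinimizer.Vmpc_add_le (hℓ0 : ∀ x u, 0 ≤ ℓ x u) (hκU : ∀ x, κ x ∈ Uset)
    (hA2 : Assumption2 f κ ℓ Z Uset ρ C ε) (hM : 1 ≤ M) {γ Vbar : ℝ} {N₀ : ℕ}
    (hγ : γ = C / (1 - ρ)) (hVbar : 0 ≤ Vbar) (hN₀N : N₀ < N) (hN₀ : Vbar - γ * ε ≤ N₀ * ε)
    (hγlow : min γ (Vbar / ε) * ((γ - 1) / γ) ^ (N - N₀) ≤ 1)
    (hθ : C ^ 2 * ρ ^ M / (1 - ρ ^ M) * ((γ - 1) / γ) ^ (N - N₀) ≤ 1)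
    (hu : IsMinimizer f κ ℓ Z Uset N M x u)
    (hx : Vmpc f κ ℓ Z Uset N M x ≤ ENNReal.ofReal Vbar) :
    Vmpc f κ ℓ Z Uset N M (f x (u 0)) +
        ENNReal.ofReal ((1 - C ^ 2 * ρ ^ M / (1 - ρ ^ M) * ((γ - 1) / γ) ^ (N - N₀)) * ℓ x (u 0))
      ≤ Vmpc f κ ℓ Z Uset N M x := by
  obtain ⟨⟨hρ0, hρ1⟩, hC, -, -⟩ := id hA2
  obtain ⟨hTε, hTℓ⟩ := hu.feedbackCost_le hℓ0 hκU hA2 hγ hVbar hN₀N hN₀ hγlow hx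
  set r := ((γ - 1) / γ) ^ (N - N₀)
  set S := ∑ j ∈ range N, ℓ (traj f x u j) (u j)
  set y := traj f x u N
  set T := feedbackCost f κ ℓ M y
  set δ := ℓ (phiX f κ y M) (κ (phiX f κ y M))
  have hyε (j : ℕ) (hj : j < M) : lmin ℓ Uset (phiX f κ y j) ≤ ε :=
    (lmin_le hℓ0 (hκU _)).trans ((stage_le_feedbackCost hℓ0 hj).trans hTε)
  have hδ : δ ≤ C ^ 2 * ρ ^ M / (1 - ρ ^ M) * r * ℓ x (u 0) := by
    have h1ρM : 0 < 1 - ρ ^ M := sub_pos.2 (pow_lt_one₀ hρ0 hρ1 (by omega))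
    calc δ ≤ C * ρ ^ M * (1 - ρ) / (1 - ρ ^ M) * T :=
          hA2.stage_le_mul_feedbackCost hℓ0 hκU hM hyε
      _ ≤ C * ρ ^ M * (1 - ρ) / (1 - ρ ^ M) * (r * (γ * ℓ x (u 0))) := by
          gcongr
      _ = C ^ 2 * ρ ^ M / (1 - ρ ^ M) * r * ℓ x (u 0) := by
          rw [hγ]; field_simp [(by linarith : 1 - ρ ≠ 0)]
  have hshift := Vmpc_shift_le (M := M) hℓ0 hκU hA2 (by omega) hu.1 (hyε 0 (by omega))
  rw [feedbackCost_succ] at hshift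
  have hT : 0 ≤ T := feedbackCost_nonneg hℓ0
  have hδ0 : 0 ≤ δ := hℓ0 _ _
  have hℓS : ℓ x (u 0) ≤ S := single_le_sum (f := fun j => ℓ (traj f x u j) (u j))
    (fun _ _ => hℓ0 _ _) (mem_range.2 (by omega : 0 < N))
  calc Vmpc f κ ℓ Z Uset N M (f x (u 0)) + ENNReal.ofReal ((1 - C ^ 2 * ρ ^ M / (1 - ρ ^ M) * r) *
        ℓ x (u 0))
      ≤ ENNReal.ofReal (S - ℓ x (u 0) + (T + δ)) +
        ENNReal.ofReal ((1 - C ^ 2 * ρ ^ M / (1 - ρ ^ M) * r) * ℓ x (u 0)) := by gcongr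
    _ = ENNReal.ofReal (S - ℓ x (u 0) + (T + δ) +
        (1 - C ^ 2 * ρ ^ M / (1 - ρ ^ M) * r) * ℓ x (u 0)) :=
      (ENNReal.ofReal_add (by linarith) (mul_nonneg (by linarith) (hℓ0 _ _))).symm
    _ ≤ ENNReal.ofReal (S + T) := ENNReal.ofReal_le_ofReal (by linarith)
    _ = Vmpc f κ ℓ Z Uset N M x :=
      (hu.Vmpc_eq hℓ0 (ne_top_of_le_ne_top ENNReal.ofReal_ne_top hx)).symm

end ValueFunction

theorem closed_loop_stability_general {n m : ℕ}
    (f : Vec n → Vec m → Vec n) (κ : Vec n → Vec m) (ℓ : Vec n → Vec m → ℝ)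
    (Z : Set (Vec n × Vec m)) (Uset : Set (Vec m)) (ρ C ε : ℝ)
    (hℓ0 : ∀ x u, 0 ≤ ℓ x u)
    (hκU : ∀ x, κ x ∈ Uset)
    (αlow αup : ℝ → ℝ) (hαlow : IsKInfty αlow)
    (hA1 : ∀ x : Vec n, αlow ‖x‖ ≤ lmin ℓ Uset x ∧ lmin ℓ Uset x ≤ αup ‖x‖)
    (hA2 : Assumption2 f κ ℓ Z Uset ρ C ε)
    (Vbar γ γlow NM : ℝ) (hVbar : 0 < Vbar) (hγ : γ = C / (1 - ρ)) (hγ1 : 1 < γ)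
    (hγlow : γlow = min γ (Vbar / ε))
    (N₀ : ℕ) (hN₀ : N₀ = ⌈max 0 ((Vbar - γ * ε) / ε)⌉₊)
    (M : ℕ) (hM : 1 ≤ M)
    (hNM : NM = N₀ + max (Real.log γlow)
        (max (Real.log (C ^ 2 * ρ ^ M / (1 - ρ ^ M))) 0) /
        (Real.log γ - Real.log (γ - 1)))
    (N : ℕ) (hN : NM < N)
    (x₀ : Vec n) (hx₀ : Vmpc f κ ℓ Z Uset N M x₀ ≤ ENNReal.ofReal Vbar)
    (xcl : ℕ → Vec n) (ustar : ℕ → ℕ → Vec m) (hinit : xcl 0 = x₀)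
    (hopt : ∀ t, IsMinimizer f κ ℓ Z Uset N M (xcl t) (ustar t))
    (hstep : ∀ t, xcl (t + 1) = f (xcl t) (ustar t 0)) :
    (∀ t, Vmpc f κ ℓ Z Uset N M (xcl t) < ⊤ ∧
        Vmpc f κ ℓ Z Uset N M (xcl t) ≤ ENNReal.ofReal Vbar) ∧
    (∀ t, (xcl t, ustar t 0) ∈ Z) ∧
    (Antitone fun t => Vmpc f κ ℓ Z Uset N M (xcl t)) ∧
    Tendsto xcl atTop (nhds 0) ∧
    (∀ t, αlow ‖xcl t‖ ≤ max γ (Vbar / ε) * αup ‖x₀‖) := by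
  obtain ⟨⟨hρ0, hρ1⟩, -, hε, -⟩ := id hA2
  subst hγlow hNM
  obtain ⟨hN₀N, hγlow1, hθ1⟩ := horizon_lt_and_mul_pow_lt_one hγ1
    (le_min (by linarith) (div_nonneg hVbar.le hε.le))
    (div_nonneg (by positivity) (sub_nonneg.2 (pow_le_one₀ hρ0 hρ1.le))) hN
  have hN₀ε : Vbar - γ * ε ≤ N₀ * ε := by
    rw [← div_le_iff₀ hε, hN₀]
    exact (le_max_right _ _).trans (Nat.le_ceil _)
  have hdec (t : ℕ) (ht : Vmpc f κ ℓ Z Uset N M (xcl t) ≤ ENNReal.ofReal Vbar) :=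
    hstep t ▸ (hopt t).Vmpc_add_le hℓ0 hκU hA2 hM hγ hVbar.le hN₀N hN₀ε hγlow1.le hθ1.le ht
  have hV (t : ℕ) : Vmpc f κ ℓ Z Uset N M (xcl t) ≤ ENNReal.ofReal Vbar := by
    induction t with
    | zero => rwa [hinit]
    | succ t ih => exact le_self_add.trans ((hdec t ih).trans ih)
  have hanti : Antitone fun t => Vmpc f κ ℓ Z Uset N M (xcl t) :=
    antitone_nat_of_succ_le fun t => le_self_add.trans (hdec t (hV t))
  have hlow (t : ℕ) : ENNReal.ofReal (αlow ‖xcl t‖) ≤ Vmpc f κ ℓ Z Uset N M (xcl t) :=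
    (ENNReal.ofReal_le_ofReal (hA1 _).1).trans (ofReal_lmin_le_Vmpc hℓ0 (by omega) _)
  refine ⟨fun t => ⟨(hV t).trans_lt ENNReal.ofReal_lt_top, hV t⟩,
    fun t => ((hopt t).1 0 (by omega)).2, hanti, ?_, fun t => ?_⟩
  · refine tendsto_zero_of_lyapunov (V := fun t => Vmpc f κ ℓ Z Uset N M (xcl t)) hαlow
      (sub_pos.2 hθ1) (fun t => ?_) (ne_top_of_le_ne_top ENNReal.ofReal_ne_top (hV 0))
    refine le_trans (add_le_add_right (ENNReal.ofReal_le_ofReal ?_) _) (hdec t (hV t))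
    exact mul_le_mul_of_nonneg_left ((hA1 _).1.trans (lmin_le hℓ0 ((hopt t).1 0 (by omega)).1))
      (sub_pos.2 hθ1).le
  · have hαup : 0 ≤ αup ‖x₀‖ := (lmin_nonneg hℓ0 x₀).trans (hA1 x₀).2
    refine (ENNReal.ofReal_le_ofReal_iff (mul_nonneg (by positivity) hαup)).1 ?_
    calc ENNReal.ofReal (αlow ‖xcl t‖) ≤ Vmpc f κ ℓ Z Uset N M (xcl 0) :=
          (hlow t).trans (hanti (Nat.zero_le t))
      _ ≤ ENNReal.ofReal (max γ (Vbar / ε) * lmin ℓ Uset x₀) :=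
          hγ ▸ hinit ▸ Vmpc_le_max_mul_lmin hℓ0 hκU hA2 hVbar.le (hinit ▸ hx₀)
      _ ≤ ENNReal.ofReal (max γ (Vbar / ε) * αup ‖x₀‖) :=
          ENNReal.ofReal_le_ofReal (mul_le_mul_of_nonneg_left (hA1 x₀).2 (by positivity))

/-- Theorem 1: recursive feasibility, constraint satisfaction and
stability: under Assumptions 1 and 2 with `ρ > 0`, `γ = C/(1-ρ) > 1`, for `N > N_M`
(so `ε_{N,M} > 0`), every closed loop `x(t+1) = f(x(t), u*(0|t))` generated by
minimizing input sequences starting from `x₀` with `V_{N,M}(x₀) ≤ V̄` satisfies: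
(i) feasibility `V_{N,M}(x(t)) < ∞` and `x(t) ∈ X_V̄` for all `t`; (ii) the closed-loop
constraints `(x(t), u(t)) ∈ Z`; (iii) `V_{N,M}(x(t))` is nonincreasing; and
(iv) asymptotic stability: `x(t) → 0` and `α̲(‖x(t)‖) ≤ γ_V̄ ᾱ(‖x₀‖)` for all `t`. -/
theorem closed_loop_stability {n m : ℕ}
    (f : Vec n → Vec m → Vec n) (κ : Vec n → Vec m) (ℓ : Vec n → Vec m → ℝ)
    (Z : Set (Vec n × Vec m)) (Uset : Set (Vec m)) (ρ C ε : ℝ)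
    (hf : Continuous fun p : Vec n × Vec m => f p.1 p.2) (hf0 : f 0 0 = 0)
    (hℓ : Continuous fun p : Vec n × Vec m => ℓ p.1 p.2) (hℓ0 : ∀ x u, 0 ≤ ℓ x u)
    (hZ0 : ((0 : Vec n), (0 : Vec m)) ∈ interior Z) (hU : IsCompact Uset)
    (hκ : Continuous κ) (hκU : ∀ x, κ x ∈ Uset)
    (αlow αup : ℝ → ℝ) (hαlow : IsKInfty αlow) (hαup : IsKInfty αup)
    (hA1 : ∀ x : Vec n, αlow ‖x‖ ≤ lmin ℓ Uset x ∧ lmin ℓ Uset x ≤ αup ‖x‖)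
    (hℓ00 : ℓ 0 0 = 0)
    (hA2 : Assumption2 f κ ℓ Z Uset ρ C ε) (hρpos : 0 < ρ)
    (Vbar γ ργ γlow NM : ℝ) (hVbar : 0 < Vbar) (hγ : γ = C / (1 - ρ)) (hγ1 : 1 < γ)
    (hργ : ργ = (γ - 1) / γ) (hγlow : γlow = min γ (Vbar / ε))
    (N₀ : ℕ) (hN₀ : N₀ = ⌈max 0 ((Vbar - γ * ε) / ε)⌉₊)
    (M : ℕ) (hM : 1 ≤ M)
    (hNM : NM = N₀ + max (Real.log γlow)
        (max (Real.log (C ^ 2 * ρ ^ M / (1 - ρ ^ M))) 0) /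
        (Real.log γ - Real.log (γ - 1)))
    (N : ℕ) (hN : NM < N)
    (x₀ : Vec n) (hx₀ : Vmpc f κ ℓ Z Uset N M x₀ ≤ ENNReal.ofReal Vbar)
    (xcl : ℕ → Vec n) (ustar : ℕ → ℕ → Vec m) (hinit : xcl 0 = x₀)
    (hopt : ∀ t, IsMinimizer f κ ℓ Z Uset N M (xcl t) (ustar t))
    (hstep : ∀ t, xcl (t + 1) = f (xcl t) (ustar t 0)) :
    (∀ t, Vmpc f κ ℓ Z Uset N M (xcl t) < ⊤ ∧
        Vmpc f κ ℓ Z Uset N M (xcl t) ≤ ENNReal.ofReal Vbar) ∧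
    (∀ t, (xcl t, ustar t 0) ∈ Z) ∧
    (Antitone fun t => Vmpc f κ ℓ Z Uset N M (xcl t)) ∧
    Tendsto xcl atTop (nhds 0) ∧
    (∀ t, αlow ‖xcl t‖ ≤ max γ (Vbar / ε) * αup ‖x₀‖) :=
  closed_loop_stability_general f κ ℓ Z Uset ρ C ε hℓ0 hκU αlow αup hαlow hA1 hA2 Vbar γ γlow NM
    hVbar hγ hγ1 hγlow N₀ hN₀ M hM hNM N hN x₀ hx₀ xcl ustar hinit hopt hstep
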